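/- Let g ≥ 1, let ℓ be even, let x satisfy √(2/3) < x ≤ 1, and suppose there exists k₀ : ℕ with 1 ≤ k₀ ≤ g and 8k₀ < ℓ < 9k₀. Then |∑_{k=1}^{g} E_{4k}^{(ℓ)}(x)| ≥ ((3x²/2)^{4k₀} − 1) − g · ((3x² − x⁴)/2)^{ℓ/2}. (For fixed x > √(2/3) this lower bound grows exponentially in ℓ, which is the quantitative content of the paper's worst-case counterexample for the Pauli-path method.) -/
import Mathlib


open Polynomial

/-- The polynomial `P_k = ((3/2)X² − (1/2)X⁴)^k`, whose coefficients are the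
total weight-`w` Pauli-path coefficients of one layer of majority-voting gates
applied to `O_k = ∏_{i=1}^k Z_{3i−2}` with initial state `|0…0⟩`. -/
noncomputable def P (k : ℕ) : Polynomial ℝ :=
  (C (3/2) * X ^ 2 - C (1/2) * X ^ 4) ^ k

/-- `F k w` is the coefficient of `X^w` in `P_k`. -/
noncomputable def F (k w : ℕ) : ℝ := (P k).coeff w

/-- `E k ℓ x = ∑_{w > ℓ} F_w(k) x^w`: the truncation error of the Pauli-path
method with cutoff `ℓ` at `x = 1 − p` (the sum is finite since `F_w(k) = 0`
for `w > 4k`). -/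
noncomputable def E (k ℓ : ℕ) (x : ℝ) : ℝ :=
  ∑ w ∈ Finset.Ioc ℓ (4 * k), F k w * x ^ w


/-- positive term magnitudes -/
noncomputable def tt (n : ℕ) (u : ℝ) (j : ℕ) : ℝ :=
  (n.choose j : ℝ) * (3/2)^(n-j) * (1/2)^j * u^(n+j)

/-- truncated (tail) binomial sum -/
noncomputable def Ssum (n L : ℕ) (u : ℝ) : ℝ :=
  ∑ j ∈ Finset.range (n+1),
    if L < n + j then (n.choose j : ℝ) * (3/2)^(n-j) * (-(1/2))^j * u^(n+j) else 0

lemma sum_binom (n : ℕ) (u : ℝ) :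
    ∑ j ∈ Finset.range (n+1), (n.choose j : ℝ) * (3/2)^(n-j) * (-(1/2))^j * u^(n+j)
      = ((3*u - u^2)/2)^n := by
  have h := add_pow (-(u/2)) (3/2 : ℝ) n
  have : ((3*u - u^2)/2)^n = u^n * ((-(u/2)) + 3/2)^n := by
    rw [← mul_pow]; ring_nf
  rw [this, h, Finset.mul_sum]
  apply Finset.sum_congr rfl
  intro j hj
  have : (-(u/2))^j = (-(1/2):ℝ)^j * u^j := by
    rw [← mul_pow]; ring_nf
  rw [this]
  rw [pow_add]
  ring

lemma Ssum_full (n L : ℕ) (u : ℝ) (h : L < n) :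
    Ssum n L u = ((3*u - u^2)/2)^n := by
  rw [Ssum, ← sum_binom n u]
  apply Finset.sum_congr rfl
  intro j hj
  rw [if_pos (by omega)]



lemma Ssum_recur (n L : ℕ) (u : ℝ) (hL : 2 ≤ L) :
    Ssum (n+1) L u = (3/2)*u * Ssum n (L-1) u - u^2/2 * Ssum n (L-2) u := by
  have key : ∀ i ∈ Finset.range (n+1),
      (if L < (n+1) + (i+1) then ((n+1).choose (i+1) : ℝ) * (3/2)^((n+1)-(i+1)) * (-(1/2))^(i+1) * u^((n+1)+(i+1)) else 0)
      = (3/2)*u * (if L-1 < n + (i+1) then (n.choose (i+1) : ℝ) * (3/2)^(n-(i+1)) * (-(1/2))^(i+1) * u^(n+(i+1)) else 0)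
        + (-(u^2/2)) * (if L-2 < n + i then (n.choose i : ℝ) * (3/2)^(n-i) * (-(1/2))^i * u^(n+i) else 0) := by
    intro i hi
    simp only [Finset.mem_range] at hi
    have hcond : (L < (n+1) + (i+1)) ↔ (L-1 < n + (i+1)) := by omega
    have hcond2 : (L < (n+1) + (i+1)) ↔ (L-2 < n + i) := by omega
    by_cases h : L < (n+1)+(i+1)
    · rw [if_pos h, if_pos (hcond.mp h), if_pos (hcond2.mp h)]
      have hch : ((n+1).choose (i+1) : ℝ) = (n.choose i : ℝ) + (n.choose (i+1) : ℝ) := by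
        rw [Nat.choose_succ_succ]; push_cast; ring
      rcases (by omega : n - i = (n - (i+1)) + 1 ∨ i = n) with he2 | he2
      · rw [hch, (by omega : (n+1) - (i+1) = n - i), he2,
            (by omega : (n+1)+(i+1) = (n+i)+2), (by omega : n+(i+1) = (n+i)+1)]
        simp only [pow_succ]
        ring
      · subst he2
        rw [hch, (show ((Nat.choose i (i+1) : ℕ) : ℝ) = 0 by rw [Nat.choose_succ_self]; norm_num),
            (show (i+1) - (i+1) = 0 by omega), (show i - i = 0 by omega),
            (show (i+1)+(i+1) = (i+i)+2 by omega), (show i+(i+1) = (i+i)+1 by omega)]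
        simp only [pow_succ, pow_zero]
        ring
    · rw [if_neg h, if_neg (fun hc => h (hcond.mpr hc)), if_neg (fun hc => h (hcond2.mpr hc))]
      ring
  rw [Ssum, Finset.sum_range_succ']
  rw [Finset.sum_congr rfl key, Finset.sum_add_distrib, ← Finset.mul_sum, ← Finset.mul_sum]
  rw [Ssum, Ssum]
  rw [Finset.sum_range_succ' (fun j => if L-1 < n + j then (n.choose j : ℝ) * (3/2)^(n-j) * (-(1/2))^j * u^(n+j) else 0) n]
  have hz : (if L < n + 1 + 0 then ((n+1).choose 0 : ℝ) * (3/2)^(n+1-0) * (-(1/2))^0 * u^(n+1+0) else 0)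
      = (3/2)*u * (if L-1 < n + 0 then (n.choose 0 : ℝ) * (3/2)^(n-0) * (-(1/2))^0 * u^(n+0) else 0) := by
    have hc : (L < n + 1 + 0) ↔ (L - 1 < n + 0) := by omega
    by_cases h : L < n + 1 + 0
    · rw [if_pos h, if_pos (hc.mp h)]
      simp only [Nat.choose_zero_right, Nat.cast_one, pow_zero, Nat.sub_zero, Nat.add_zero,
        (by omega : n + 1 - 0 = n + 1), (by omega : n + 1 + 0 = n + 1), pow_succ]
      ring
    · rw [if_neg h, if_neg (fun hcc => h (hc.mpr hcc))]; ring
  rw [hz]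
  -- remaining: match ranges; top extra term of first sum is zero since choose n (n+1) = 0
  rw [Finset.sum_range_succ (fun i => if L-1 < n + (i+1) then (n.choose (i+1) : ℝ) * (3/2)^(n-(i+1)) * (-(1/2))^(i+1) * u^(n+(i+1)) else 0) n]
  simp only [Nat.choose_succ_self, Nat.cast_zero, zero_mul, ite_self, add_zero]
  ring



lemma y_nonneg {u : ℝ} (h0 : 0 ≤ u) (h3 : u ≤ 3) : 0 ≤ (3*u - u^2)/2 := by nlinarith

lemma Ssum_sgn : ∀ n L : ℕ, ∀ u : ℝ, 0 ≤ u → u ≤ 3 → n ≤ L →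
    0 ≤ (-1 : ℝ)^(L+n+1) * Ssum n L u := by
  intro n
  induction n with
  | zero =>
    intro L u hu0 hu3 hL
    have : Ssum 0 L u = 0 := by
      rw [Ssum, Finset.sum_range_one, if_neg (by omega)]
    rw [this, mul_zero]
  | succ n ih =>
    intro L u hu0 hu3 hL
    by_cases hL2 : 2 ≤ L
    · rw [Ssum_recur n L u hL2]
      have e1 : (-1:ℝ)^(L+(n+1)+1) = (-1:ℝ)^((L-1)+n+1) := by
        rw [(show L+(n+1)+1 = ((L-1)+n+1)+2 by omega), pow_succ, pow_succ]; ring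
      have t1 : 0 ≤ (-1:ℝ)^(L+(n+1)+1) * ((3/2)*u*Ssum n (L-1) u) := by
        have hrw : (-1:ℝ)^(L+(n+1)+1) * ((3/2)*u*Ssum n (L-1) u)
            = ((3/2)*u) * ((-1:ℝ)^((L-1)+n+1) * Ssum n (L-1) u) := by rw [e1]; ring
        rw [hrw]
        exact mul_nonneg (by positivity) (ih (L-1) u hu0 hu3 (by omega))
      have t2 : 0 ≤ (-1:ℝ)^(L+(n+1)+1) * (-(u^2/2) * Ssum n (L-2) u) := by
        by_cases hc : n ≤ L - 2
        · have e2 : (-1:ℝ)^(L+(n+1)+1) * (-1) = (-1:ℝ)^((L-2)+n+1) := by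
            rw [(show L+(n+1)+1 = ((L-2)+n+1)+3 by omega), pow_succ, pow_succ, pow_succ]; ring
          have hrw : (-1:ℝ)^(L+(n+1)+1) * (-(u^2/2) * Ssum n (L-2) u)
              = (u^2/2) * (((-1:ℝ)^(L+(n+1)+1) * (-1)) * Ssum n (L-2) u) := by ring
          rw [hrw, e2]
          exact mul_nonneg (by positivity) (ih (L-2) u hu0 hu3 hc)
        · -- n = L - 1, so L = n+1, Ssum n (L-2) is the full sum ≥ 0
          have hLn : L = n + 1 := by omega
          have hfull : Ssum n (L-2) u = ((3*u - u^2)/2)^n := Ssum_full n (L-2) u (by omega)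
          have hy : (0:ℝ) ≤ ((3*u - u^2)/2)^n := pow_nonneg (y_nonneg hu0 hu3) n
          have e3 : (-1:ℝ)^(L+(n+1)+1) = -1 := by
            rw [hLn, (show n+1+(n+1)+1 = 2*(n+1)+1 by omega), pow_succ, pow_mul]
            norm_num
          rw [e3, hfull]
          have : (-1:ℝ) * (-(u^2/2) * ((3*u - u^2)/2)^n) = (u^2/2) * ((3*u - u^2)/2)^n := by ring
          rw [this]
          exact mul_nonneg (by positivity) hy
      have hsplit : (-1:ℝ)^(L+(n+1)+1) * ((3/2)*u*Ssum n (L-1) u - u^2/2 * Ssum n (L-2) u)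
          = (-1:ℝ)^(L+(n+1)+1) * ((3/2)*u*Ssum n (L-1) u)
            + (-1:ℝ)^(L+(n+1)+1) * (-(u^2/2) * Ssum n (L-2) u) := by ring
      rw [hsplit]
      exact add_nonneg t1 t2
    · -- L < 2 and n+1 ≤ L : so n = 0, L = 1
      have hn : n = 0 := by omega
      have hL1 : L = 1 := by omega
      subst hn; subst hL1
      have : Ssum 1 1 u = -(u^2/2) := by
        rw [Ssum]
        rw [Finset.sum_range_succ, Finset.sum_range_one]
        rw [if_neg (by omega), if_pos (by omega)]
        norm_num
        ring
      rw [this]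
      norm_num
      nlinarith [sq_nonneg u]



lemma tt_nonneg (n : ℕ) {u : ℝ} (hu : 0 ≤ u) (j : ℕ) : 0 ≤ tt n u j := by
  rw [tt]; positivity

lemma tt_succ (n : ℕ) (u : ℝ) (j : ℕ) (hj : j < n) :
    3 * (j+1 : ℝ) * tt n u (j+1) = ((n : ℝ) - j) * u * tt n u j := by
  rw [tt, tt]
  have hch : (n.choose (j+1) : ℝ) * (j+1) = (n.choose j : ℝ) * ((n:ℝ) - j) := by
    have := Nat.choose_succ_right_eq n j
    have h2 : ((n.choose (j+1) * (j+1) : ℕ) : ℝ) = ((n.choose j * (n - j) : ℕ) : ℝ) := by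
      exact_mod_cast congrArg (Nat.cast (R := ℝ)) this
    push_cast [Nat.cast_sub (le_of_lt hj)] at h2
    linarith [h2]
  have he : n - j = (n - (j+1)) + 1 := by omega
  rw [he, (show n+(j+1) = (n+j)+1 by omega)]
  simp only [pow_succ]
  linear_combination ((3/2) * (3/2)^(n-(j+1)) * (1/2)^j * u^(n+j) * u) * hch

lemma tt_mono (n : ℕ) {u : ℝ} (hu : 0 ≤ u) (j : ℕ) (hj : j < n)
    (h : 3 * ((j:ℝ)+1) ≤ ((n:ℝ) - j) * u) : tt n u j ≤ tt n u (j+1) := by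
  have hid := tt_succ n u j hj
  have h0 := tt_nonneg n hu j
  nlinarith [hid, h0, h]

lemma tt_one (n : ℕ) {u : ℝ} (hu : 0 ≤ u) (hn : 0 < n) (h : 6 ≤ (n:ℝ) * u) :
    2 * tt n u 0 ≤ tt n u 1 := by
  have hid := tt_succ n u 0 hn
  have h0 := tt_nonneg n hu 0
  push_cast at hid
  nlinarith [hid, h0, h]

/-- alternating head sums: even-length ≥ t0, odd-length ≤ t0 - t1 -/
lemma alt_head (n : ℕ) {u : ℝ} (hu : 0 ≤ u) : ∀ m : ℕ,
    ((∀ j, j + 1 ≤ 2*m → tt n u j ≤ tt n u (j+1)) →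
      tt n u 0 ≤ ∑ j ∈ Finset.range (2*m+1), (-1:ℝ)^j * tt n u j)
    ∧ ((∀ j, j + 1 ≤ 2*m+1 → tt n u j ≤ tt n u (j+1)) →
      ∑ j ∈ Finset.range (2*m+1+1), (-1:ℝ)^j * tt n u j ≤ tt n u 0 - tt n u 1) := by
  intro m
  induction m with
  | zero =>
    constructor
    · intro _
      simp [Finset.sum_range_one]
    · intro _
      rw [(show 2*0+1+1 = 2 by omega), Finset.sum_range_succ, Finset.sum_range_one]
      simp
  | succ m ih =>
    constructor
    · intro hmono
      have h1 := ih.1 (fun j hj => hmono j (by omega))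
      have hstep : tt n u (2*m+1) ≤ tt n u (2*m+1+1) := hmono (2*m+1) (by omega)
      rw [(show 2*(m+1)+1 = (2*m+1+1)+1 by omega), Finset.sum_range_succ,
        Finset.sum_range_succ]
      have e1 : (-1:ℝ)^(2*m+1) = -1 := by rw [pow_succ, pow_mul]; norm_num
      have e2 : (-1:ℝ)^(2*m+1+1) = 1 := by rw [pow_succ, e1]; norm_num
      rw [e1, e2]
      linarith [h1, hstep]
    · intro hmono
      have h1 := ih.2 (fun j hj => hmono j (by omega))
      have hstep : tt n u (2*m+1+1) ≤ tt n u (2*m+1+1+1) := hmono (2*m+1+1) (by omega)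
      rw [(show 2*(m+1)+1+1 = ((2*m+1+1)+1)+1 by omega), Finset.sum_range_succ,
        Finset.sum_range_succ]
      have e1 : (-1:ℝ)^(2*m+1+1) = 1 := by
        rw [pow_succ, pow_succ, pow_mul]; norm_num
      have e2 : (-1:ℝ)^(2*m+1+1+1) = -1 := by rw [pow_succ, e1]; norm_num
      rw [e1, e2]
      linarith [h1, hstep]





lemma Ssum_head (n L : ℕ) (u : ℝ) (hnL : n ≤ L) (hJ : L - n ≤ n) :
    Ssum n L u = ((3*u - u^2)/2)^n - ∑ j ∈ Finset.range ((L-n)+1), (-1:ℝ)^j * tt n u j := by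
  have hsplit : ∀ j ∈ Finset.range (n+1),
      (if L < n + j then (n.choose j : ℝ) * (3/2)^(n-j) * (-(1/2))^j * u^(n+j) else 0)
      = (n.choose j : ℝ) * (3/2)^(n-j) * (-(1/2))^j * u^(n+j)
        - (if j ≤ L - n then (n.choose j : ℝ) * (3/2)^(n-j) * (-(1/2))^j * u^(n+j) else 0) := by
    intro j hj
    by_cases h : L < n + j
    · rw [if_pos h, if_neg (by omega)]; ring
    · rw [if_neg h, if_pos (by omega)]; ring
  rw [Ssum, Finset.sum_congr rfl hsplit, Finset.sum_sub_distrib, sum_binom]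
  congr 1
  rw [← Finset.sum_subset (Finset.range_subset_range.mpr (by omega : (L-n)+1 ≤ n+1))
      (fun x _ hx => by rw [if_neg (by simp at hx ⊢; omega)])]
  apply Finset.sum_congr rfl
  intro j hj
  simp only [Finset.mem_range] at hj
  rw [if_pos (by omega)]
  rw [tt, (show (-(1/2):ℝ)^j = (-1)^j * (1/2)^j by rw [← neg_one_mul, mul_pow])]
  ring

lemma strong (k₀ L : ℕ) (u : ℝ) (hu1 : 2/3 < u) (hu2 : u ≤ 1)
    (hL1 : 4*k₀ < L) (hL2 : 2*L < 9*k₀) :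
    (3*u/2)^(4*k₀) - ((3*u-u^2)/2)^(4*k₀) ≤ (-1:ℝ)^(L+1) * Ssum (4*k₀) L u := by
  set n := 4*k₀ with hn
  set J := L - n with hJdef
  have hu0 : (0:ℝ) ≤ u := by linarith
  have hJ1 : 1 ≤ J := by omega
  have hJk : 2*J + 1 ≤ k₀ := by omega
  have hk3 : 3 ≤ k₀ := by omega
  have hJn : J ≤ n := by omega
  have hmono : ∀ j, j + 1 ≤ J → tt n u j ≤ tt n u (j+1) := by
    intro j hj
    apply tt_mono n hu0 j (by omega)
    have hnat : 9*(j+1) ≤ 2*(n - j) := by omega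
    have hc : ((9*(j+1) : ℕ) : ℝ) ≤ ((2*(n-j) : ℕ) : ℝ) := by exact_mod_cast hnat
    push_cast [Nat.cast_sub (show j ≤ n by omega)] at hc
    nlinarith [hc, hu1, (show ((n:ℝ) - j) ≥ 0 by
      have : (j:ℝ) ≤ (n:ℝ) := by exact_mod_cast (show j ≤ n by omega)
      linarith)]
  have htt0 : tt n u 0 = (3*u/2)^n := by
    rw [tt]
    simp only [Nat.choose_zero_right, Nat.cast_one, pow_zero, Nat.sub_zero, Nat.add_zero]
    rw [(show (3*u/2) = (3/2)*u by ring), mul_pow]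
    ring
  have hhead := Ssum_head n L u (by omega) (by omega)
  have hy : (0:ℝ) ≤ ((3*u-u^2)/2)^n :=
    pow_nonneg (by nlinarith) n
  have hpar : (-1:ℝ)^(L+1) = (-1:ℝ)^(J+1) := by
    rw [(show L + 1 = 4*k₀ + (J+1) by omega), pow_add, pow_mul]
    norm_num
  rw [hpar, hhead, ← hJdef]
  rcases Nat.even_or_odd J with ⟨m, hm⟩ | ⟨m, hm⟩
  · -- J = 2m even : (-1)^(J+1) = -1
    have hH := (alt_head n hu0 m).1 (fun j hj => hmono j (by omega))
    have he : (-1:ℝ)^(J+1) = -1 := by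
      rw [(show J + 1 = 2*m+1 by omega), pow_succ, pow_mul]; norm_num
    rw [he, (show J + 1 = 2*m+1 by omega)]
    rw [htt0] at hH
    linarith [hH]
  · -- J = 2m+1 odd : (-1)^(J+1) = 1
    have hH := (alt_head n hu0 m).2 (fun j hj => hmono j (by omega))
    have h21 : 2 * tt n u 0 ≤ tt n u 1 := by
      apply tt_one n hu0 (by omega)
      have : (12:ℝ) ≤ (n:ℝ) := by exact_mod_cast (show 12 ≤ n by omega)
      nlinarith [this, hu1]
    have he : (-1:ℝ)^(J+1) = 1 := by
      rw [(show J + 1 = 2*(m+1) by omega), pow_mul]; norm_num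
    rw [he, (show J + 1 = 2*m+1+1 by omega)]
    rw [htt0] at hH h21
    linarith [hH, h21, hy]









lemma P_eq (k : ℕ) : P k = ∑ i ∈ Finset.range (k+1),
    C ((3/2 : ℝ)^i * (-(1/2))^(k-i) * (k.choose i)) * X^(4*k - 2*i) := by
  rw [P, sub_eq_add_neg, add_pow]
  apply Finset.sum_congr rfl
  intro i hi
  simp only [Finset.mem_range] at hi
  have h1 : (C (3/2:ℝ) * X^2)^i = C ((3/2:ℝ)^i) * X^(2*i) := by
    rw [mul_pow, ← C_pow, ← pow_mul]
  have h2 : (-(C (1/2:ℝ) * X^4))^(k-i) = C ((-(1/2):ℝ)^(k-i)) * X^(4*(k-i)) := by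
    rw [(show -(C (1/2:ℝ) * X^4) = C (-(1/2):ℝ) * X^4 by rw [map_neg]; ring),
      mul_pow, ← C_pow, ← pow_mul]
  have h3 : ((k.choose i : ℕ) : Polynomial ℝ) = C ((k.choose i : ℕ) : ℝ) := by simp
  rw [h1, h2, h3, (show 4*k - 2*i = 2*i + 4*(k-i) by omega), pow_add]
  rw [map_mul, map_mul]
  ring

lemma F_eq (k w : ℕ) : F k w = ∑ i ∈ Finset.range (k+1),
    if w = 4*k - 2*i then (3/2 : ℝ)^i * (-(1/2))^(k-i) * (k.choose i) else 0 := by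
  rw [F, P_eq, finset_sum_coeff]
  apply Finset.sum_congr rfl
  intro i hi
  rw [coeff_C_mul, coeff_X_pow]
  by_cases h : w = 4*k - 2*i
  · rw [if_pos h, if_pos h, mul_one]
  · rw [if_neg h, if_neg h, mul_zero]

lemma E_eq (k ℓ : ℕ) (x : ℝ) (hℓ : Even ℓ) : E k ℓ x = Ssum k (ℓ/2) (x^2) := by
  rw [E]
  have hF : ∀ w ∈ Finset.Ioc ℓ (4*k), F k w * x^w
      = ∑ i ∈ Finset.range (k+1),
          (if w = 4*k - 2*i then (3/2 : ℝ)^i * (-(1/2))^(k-i) * (k.choose i) * x^w else 0) := by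
    intro w hw
    rw [F_eq, Finset.sum_mul]
    apply Finset.sum_congr rfl
    intro i hi
    by_cases h : w = 4*k - 2*i
    · rw [if_pos h, if_pos h]
    · rw [if_neg h, if_neg h, zero_mul]
  rw [Finset.sum_congr rfl hF, Finset.sum_comm]
  have hswap : ∀ i ∈ Finset.range (k+1),
      (∑ w ∈ Finset.Ioc ℓ (4*k),
        if w = 4*k - 2*i then (3/2 : ℝ)^i * (-(1/2))^(k-i) * (k.choose i) * x^w else 0)
      = (if ℓ < 4*k - 2*i then (3/2 : ℝ)^i * (-(1/2))^(k-i) * (k.choose i) * x^(4*k-2*i) else 0) := by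
    intro i hi
    simp only [Finset.mem_range] at hi
    rw [Finset.sum_ite_eq' (Finset.Ioc ℓ (4*k)) (4*k - 2*i)
      (fun w => (3/2 : ℝ)^i * (-(1/2))^(k-i) * (k.choose i) * x^w)]
    congr 1
    simp only [Finset.mem_Ioc]
    have : 4*k - 2*i ≤ 4*k := by omega
    rw [eq_iff_iff]
    constructor
    · exact fun h => h.1
    · exact fun h => ⟨h, this⟩
  rw [Finset.sum_congr rfl hswap]
  -- now reflect the sum: i ↦ k - i
  rw [Ssum, ← Finset.sum_range_reflect]
  apply Finset.sum_congr rfl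
  intro j hj
  simp only [Finset.mem_range] at hj
  have hkj : k + 1 - 1 - j = k - j := by omega
  rw [hkj]
  obtain ⟨m, hm⟩ := hℓ
  have hcond : (ℓ < 4*k - 2*(k-j)) ↔ (ℓ/2 < k + j) := by omega
  by_cases h : ℓ/2 < k + j
  · rw [if_pos (hcond.mpr h), if_pos h]
    have e1 : 4*k - 2*(k-j) = 2*(k+j) := by omega
    have e2 : k - (k - j) = j := by omega
    rw [e1, e2, (show (x^2)^(k+j) = x^(2*(k+j)) by rw [← pow_mul]),
      Nat.choose_symm (show j ≤ k by omega)]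
    ring
  · rw [if_neg (fun hc => h (hcond.mp hc)), if_neg h]

theorem averaged_truncation_error_lower_bound (g : ℕ) (hg : 1 ≤ g) (ℓ : ℕ) (hℓ : Even ℓ)
    (x : ℝ) (hx0 : Real.sqrt (2/3) < x) (hx1 : x ≤ 1)
    (k₀ : ℕ) (hk₀1 : 1 ≤ k₀) (hk₀g : k₀ ≤ g) (h1 : 8 * k₀ < ℓ) (h2 : ℓ < 9 * k₀) :
    ((3 * x ^ 2 / 2) ^ (4 * k₀) - 1) - g * ((3 * x ^ 2 - x ^ 4) / 2) ^ (ℓ / 2)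
      ≤ |∑ k ∈ Finset.Icc 1 g, E (4 * k) ℓ x| := by
  obtain ⟨m, hm⟩ := hℓ
  set u : ℝ := x^2 with hu
  set L : ℕ := ℓ/2 with hLdef
  have h2L : 2*L = ℓ := by omega
  have hsq : Real.sqrt (2/3) ^ 2 = 2/3 := Real.sq_sqrt (by norm_num)
  have hsnn : (0:ℝ) ≤ Real.sqrt (2/3) := Real.sqrt_nonneg _
  have hu1 : 2/3 < u := by rw [hu]; nlinarith [hx0, hsnn, hsq]
  have hu2 : u ≤ 1 := by rw [hu]; nlinarith [hx0, hsnn, hx1]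
  have hu0 : (0:ℝ) ≤ u := by linarith
  have hy0 : (0:ℝ) ≤ (3*u - u^2)/2 := by nlinarith
  have hy1 : (3*u - u^2)/2 ≤ 1 := by nlinarith
  have hyL : (0:ℝ) ≤ ((3*u - u^2)/2)^L := pow_nonneg hy0 L
  have hx4 : x^4 = u^2 := by rw [hu]; ring
  have hE : ∀ k, E (4*k) ℓ x = Ssum (4*k) L u := fun k => E_eq (4*k) ℓ x ⟨m, hm⟩
  have hpow : (-1:ℝ)^(L+1) = 1 ∨ (-1:ℝ)^(L+1) = -1 := by
    rcases Nat.even_or_odd (L+1) with h | h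
    · exact Or.inl (Even.neg_one_pow h)
    · exact Or.inr (Odd.neg_one_pow h)
  -- per-term lower bounds
  have hbound : ∀ k ∈ Finset.Icc 1 g,
      (if k = k₀ then ((3*u/2)^(4*k₀) - 1) else -(((3*u - u^2)/2)^L))
        ≤ (-1:ℝ)^(L+1) * Ssum (4*k) L u := by
    intro k hk
    by_cases hkk : k = k₀
    · rw [if_pos hkk, hkk]
      have hs := strong k₀ L u hu1 hu2 (by omega) (by omega)
      have hyk : ((3*u - u^2)/2)^(4*k₀) ≤ 1 := pow_le_one₀ hy0 hy1
      linarith [hs, hyk]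
    · rw [if_neg hkk]
      by_cases hcase : 4*k ≤ L
      · have hsg := Ssum_sgn (4*k) L u hu0 (by linarith) hcase
        have hpar : (-1:ℝ)^(L+(4*k)+1) = (-1:ℝ)^(L+1) := by
          rw [(show L+(4*k)+1 = (L+1) + 4*k by omega), pow_add, pow_mul]
          norm_num
        rw [hpar] at hsg
        linarith [hsg, hyL]
      · have hfull : Ssum (4*k) L u = ((3*u - u^2)/2)^(4*k) :=
          Ssum_full (4*k) L u (by omega)
        have hyk0 : (0:ℝ) ≤ ((3*u - u^2)/2)^(4*k) := pow_nonneg hy0 _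
        have hyle : ((3*u - u^2)/2)^(4*k) ≤ ((3*u - u^2)/2)^L :=
          pow_le_pow_of_le_one hy0 hy1 (by omega)
        rw [hfull]
        rcases hpow with h | h <;> rw [h] <;> linarith
  -- sum of lower bounds
  have hmem : k₀ ∈ Finset.Icc 1 g := Finset.mem_Icc.mpr ⟨hk₀1, hk₀g⟩
  have hsum1 : ∑ k ∈ Finset.Icc 1 g,
      (if k = k₀ then ((3*u/2)^(4*k₀) - 1) else -(((3*u - u^2)/2)^L))
      ≤ (-1:ℝ)^(L+1) * ∑ k ∈ Finset.Icc 1 g, E (4*k) ℓ x := by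
    rw [Finset.mul_sum]
    apply Finset.sum_le_sum
    intro k hk
    rw [hE k]
    exact hbound k hk
  have hsum2 : ((3*u/2)^(4*k₀) - 1) - (g:ℝ) * ((3*u - u^2)/2)^L
      ≤ ∑ k ∈ Finset.Icc 1 g,
        (if k = k₀ then ((3*u/2)^(4*k₀) - 1) else -(((3*u - u^2)/2)^L)) := by
    rw [← Finset.add_sum_erase _ _ hmem, if_pos rfl]
    have hrest : ∑ k ∈ (Finset.Icc 1 g).erase k₀,
        (if k = k₀ then ((3*u/2)^(4*k₀) - 1) else -(((3*u - u^2)/2)^L))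
        = -(((((Finset.Icc 1 g).erase k₀).card : ℝ)) * ((3*u - u^2)/2)^L) := by
      rw [Finset.sum_congr rfl (fun k hk => if_neg (Finset.ne_of_mem_erase hk)),
        Finset.sum_const, nsmul_eq_mul]
      ring
    rw [hrest]
    have hcard : (((Finset.Icc 1 g).erase k₀).card : ℝ) ≤ (g:ℝ) := by
      have h1 : ((Finset.Icc 1 g).erase k₀).card ≤ (Finset.Icc 1 g).card :=
        Finset.card_erase_le
      have h2 : (Finset.Icc 1 g).card = g := by rw [Nat.card_Icc]; omega
      exact_mod_cast le_trans h1 (le_of_eq h2)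
    nlinarith [hcard, hyL]
  have habs : (-1:ℝ)^(L+1) * ∑ k ∈ Finset.Icc 1 g, E (4*k) ℓ x
      ≤ |∑ k ∈ Finset.Icc 1 g, E (4*k) ℓ x| := by
    rcases hpow with h | h <;> rw [h]
    · rw [one_mul]; exact le_abs_self _
    · rw [neg_one_mul]; exact neg_le_abs _
  calc ((3*u/2)^(4*k₀) - 1) - (g:ℝ) * ((3*u - x^4)/2)^L
      = ((3*u/2)^(4*k₀) - 1) - (g:ℝ) * ((3*u - u^2)/2)^L := by rw [hx4]
    _ ≤ ∑ k ∈ Finset.Icc 1 g,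
        (if k = k₀ then ((3*u/2)^(4*k₀) - 1) else -(((3*u - u^2)/2)^L)) := hsum2
    _ ≤ (-1:ℝ)^(L+1) * ∑ k ∈ Finset.Icc 1 g, E (4*k) ℓ x := hsum1
    _ ≤ |∑ k ∈ Finset.Icc 1 g, E (4*k) ℓ x| := habs
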